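/- arXiv:math/9405203 — 4 statements merged into one kernel-verified Lean document; each statement's English description precedes it below -/
import Mathlib

section
/- The least cardinality of a set S ⊆ [ω]^ω that meets every groupwise dense subset of [ω]^ω equals 2^{ℵ_0}. In particular, for every family (a_i)_{i∈I} of infinite subsets of ω with |I| < 2^{ℵ_0}, the set X = {x ∈ [ω]^ω : for all i, not a_i ≤ x} is groupwise dense and contains no a_i. -/
open Set Cardinal MeasureTheory

/-- The characteristic function of a set of naturals, as a point of Cantor space `2^ω`. -/
noncomputable def chi (x : Set ℕ) : ℕ → Bool := fun n => @decide (n ∈ x) (Classical.dec _)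

/-- `[ω]^ω`: the collection of infinite subsets of ω. -/
def InfSets : Set (Set ℕ) := {x : Set ℕ | x.Infinite}

/-- `X ⊆ [ω]^ω` is downward closed for almost-inclusion `x ≤ y ↔ (x \ y).Finite`. -/
def DownClosed (X : Set (Set ℕ)) : Prop :=
  ∀ y ∈ X, ∀ x : Set ℕ, x.Infinite → (x \ y).Finite → x ∈ X

/-- `X` is meager as a subset of Cantor space `2^ω` (product topology on `ℕ → Bool`). -/
def MeagerSet (X : Set (Set ℕ)) : Prop := IsMeagre (chi '' X)

/-- A partition of ω into consecutive finite intervals `I n = [e n, e (n+1))`. -/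
structure IntervalPartition where
  e : ℕ → ℕ
  zero : e 0 = 0
  mono : StrictMono e

/-- The `n`-th interval of an interval partition. -/
def IntervalPartition.I (P : IntervalPartition) (n : ℕ) : Set ℕ :=
  Set.Ico (P.e n) (P.e (n + 1))

/-- `X ⊆ [ω]^ω` is groupwise dense: downward closed, and for every partition of ω into
finite intervals, the union of some infinitely many of the intervals belongs to `X`. -/
def GroupwiseDense (X : Set (Set ℕ)) : Prop :=
  X ⊆ InfSets ∧ DownClosed X ∧
    ∀ P : IntervalPartition, ∃ A : Set ℕ, A.Infinite ∧ (⋃ n ∈ A, P.I n) ∈ X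

/-- `g` eventually majorizes `f`. -/
def EvMaj (f g : ℕ → ℕ) : Prop := ∀ᶠ k in Filter.atTop, f k ≤ g k

/-- `M(Π)`: the infinite subsets of ω including only finitely many intervals of `Π`. -/
def MSet (P : IntervalPartition) : Set (Set ℕ) :=
  {x : Set ℕ | x.Infinite ∧ {n : ℕ | P.I n ⊆ x}.Finite}

/-- The index `n` of the interval `I n` of `P` containing `k`. -/
def idx (P : IntervalPartition) (k : ℕ) : ℕ := Nat.findGreatest (fun n => P.e n ≤ k) k

/-- `F_Π(k)`: the largest element of `I (n+2)`, where `k ∈ I n`. -/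
def FPart (P : IntervalPartition) (k : ℕ) : ℕ := P.e (idx P k + 3) - 1

/-- The groupwise density number 𝔤. -/
noncomputable def gNum : Cardinal :=
  sInf {c : Cardinal | ∃ S : Set (Set (Set ℕ)), (∀ G ∈ S, GroupwiseDense G) ∧
    #S = c ∧ InfSets ∩ ⋂₀ S = ∅}

/-- The bounding number 𝔟. -/
noncomputable def bNum : Cardinal :=
  sInf {c : Cardinal | ∃ F : Set (ℕ → ℕ), #F = c ∧ ∀ g : ℕ → ℕ, ∃ f ∈ F, ¬ EvMaj f g}

/-- The dominating number 𝔡. -/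
noncomputable def dNum : Cardinal :=
  sInf {c : Cardinal | ∃ F : Set (ℕ → ℕ), #F = c ∧ ∀ g : ℕ → ℕ, ∃ f ∈ F, EvMaj g f}

/-- `B_M`: the ideal of meager downward-closed subsets of `[ω]^ω`. -/
def BM : Set (Set (Set ℕ)) := {X : Set (Set ℕ) | X ⊆ InfSets ∧ DownClosed X ∧ MeagerSet X}

/-- `add(B_M)`. -/
noncomputable def addBM : Cardinal :=
  sInf {c : Cardinal | ∃ S : Set (Set (Set ℕ)), S ⊆ BM ∧ #S = c ∧ ⋃₀ S ∉ BM}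

/-- `cov(B_M)`. -/
noncomputable def covBM : Cardinal :=
  sInf {c : Cardinal | ∃ S : Set (Set (Set ℕ)), S ⊆ BM ∧ #S = c ∧
    {x : Set ℕ | x.Infinite ∧ xᶜ.Infinite} ⊆ ⋃₀ S}

/-- `unif(B_M)`. -/
noncomputable def unifBM : Cardinal :=
  sInf {c : Cardinal | ∃ S : Set (Set ℕ), (∀ x ∈ S, x.Infinite ∧ xᶜ.Infinite) ∧ #S = c ∧
    ∀ X ∈ BM, ¬ S ⊆ X}

/-- `cof(B_M)`. -/
noncomputable def cofBM : Cardinal :=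
  sInf {c : Cardinal | ∃ C : Set (Set (Set ℕ)), C ⊆ BM ∧ #C = c ∧
    ∀ X ∈ BM, ∃ Y ∈ C, X ⊆ Y}

/-- `X ⊆ [ω]^ω` is dense: every infinite `A` has an infinite subset `B ∈ X`. -/
def DenseM (X : Set (Set ℕ)) : Prop :=
  ∀ A : Set ℕ, A.Infinite → ∃ B ⊆ A, B.Infinite ∧ B ∈ X

/-- 𝔤′: the least number of non-meager downward-closed ideals on ω with empty intersection. -/
noncomputable def gNum' : Cardinal :=
  sInf {c : Cardinal | ∃ S : Set (Set (Set ℕ)),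
    (∀ X ∈ S, X ⊆ InfSets ∧ DownClosed X ∧ (∀ x ∈ X, ∀ y ∈ X, x ∪ y ∈ X) ∧ ¬ MeagerSet X) ∧
    #S = c ∧ InfSets ∩ ⋂₀ S = ∅}

/-- The splitting number 𝔰. -/
noncomputable def sNum : Cardinal :=
  sInf {c : Cardinal | ∃ S : Set (Set ℕ), #S = c ∧
    ∀ x : Set ℕ, x.Infinite → ∃ y ∈ S, (x ∩ y).Infinite ∧ (x \ y).Infinite}

/-!
A groupwise dense set is met by `[ω]^ω` itself, so the number is at most `2^ℵ₀`. Conversely,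
given fewer than `2^ℵ₀` infinite sets `aᵢ` and an interval partition `Π`, the sets
`Bᵢ = {n | aᵢ meets Iₙ}` are fewer than `2^ℵ₀` infinite sets. In an almost disjoint family of
size `2^ℵ₀` each `Bᵢ` is almost contained in at most one member, so some member `A` almost
contains no `Bᵢ`; then `⋃ n ∈ A, Iₙ` almost contains no `aᵢ`.
-/

open scoped Cardinal

universe u v

section IntervalPartition

variable (P : IntervalPartition)

theorem idx_eq_iff {k n : ℕ} : idx P k = n ↔ k ∈ P.I n := by
  have hle (m : ℕ) : m ≤ P.e m := P.mono.le_apply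
  rw [idx, Nat.findGreatest_eq_iff]
  constructor
  · rintro ⟨-, hn, hgt⟩
    refine ⟨?_, lt_of_not_ge fun h => hgt n.lt_succ_self ((hle _).trans h) h⟩
    rcases n.eq_zero_or_pos with rfl | hpos
    · simp [P.zero]
    · exact hn hpos.ne'
  · rintro ⟨hn, hk⟩
    exact ⟨(hle n).trans hn, fun _ => hn,
      fun m hm _ hm' => hk.not_ge ((P.mono.monotone hm).trans hm')⟩

theorem idx_surjective : Function.Surjective (idx P) :=
  fun n => ⟨P.e n, (idx_eq_iff P).2 ⟨le_rfl, P.mono n.lt_succ_self⟩⟩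

theorem idx_preimage (A : Set ℕ) : idx P ⁻¹' A = ⋃ n ∈ A, P.I n := by
  ext k
  simp only [mem_preimage, mem_iUnion, exists_prop, ← idx_eq_iff, exists_eq_right']

theorem finite_of_finite_image_idx {s : Set ℕ} (hs : (idx P '' s).Finite) : s.Finite := by
  have hfibre (n : ℕ) : (idx P ⁻¹' {n}).Finite := by
    rw [show idx P ⁻¹' {n} = P.I n from ext fun _ => idx_eq_iff P]
    exact finite_Ico _ _
  exact (hs.preimage' fun n _ => hfibre n).subset (subset_preimage_image _ _)

end IntervalPartition

section AlmostDisjoint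

/-- Codes of the initial segments of `f`; two distinct `f`, `g` share only the segments shorter
than their first disagreement. -/
noncomputable def prefixCodes (f : ℕ → Bool) : Set ℕ :=
  range fun n => Encodable.encode (List.ofFn fun i : Fin n => f i)

theorem prefixCodes_infinite (f : ℕ → Bool) : (prefixCodes f).Infinite :=
  infinite_range_of_injective fun m n h => by
    simpa using congrArg List.length (Encodable.encode_injective h)

theorem finite_prefixCodes_inter {f g : ℕ → Bool} (hfg : f ≠ g) :
    (prefixCodes f ∩ prefixCodes g).Finite := by
  obtain ⟨m, hm⟩ := Function.ne_iff.1 hfg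
  refine ((finite_Iic m).image fun n => Encodable.encode (List.ofFn fun i : Fin n => f i)).subset ?_
  rintro _ ⟨⟨n, rfl⟩, ⟨n', hn'⟩⟩
  have hl := Encodable.encode_injective hn'
  obtain rfl : n' = n := by simpa using congrArg List.length hl
  refine ⟨n', mem_Iic.2 <| not_lt.1 fun hlt => hm ?_, rfl⟩
  exact (congrFun (List.ofFn_inj.1 hl) ⟨m, hlt⟩).symm

theorem exists_forall_not_finite_diff_of_pairwise_finite_inter {α : Type*} {ι : Type u}
    {J : Type v} {A : J → Set α} (hA : Pairwise fun j k => (A j ∩ A k).Finite)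
    {B : ι → Set α} (hB : ∀ i, (B i).Infinite)
    (hι : Cardinal.lift.{v} #ι < Cardinal.lift.{u} #J) :
    ∃ j, ∀ i, ¬ (B i \ A j).Finite := by
  by_contra! h
  choose φ hφ using h
  have hφ_inj : Function.Injective φ := by
    intro j k hjk
    by_contra hne
    apply hB (φ k)
    refine (((hφ k).union (hjk ▸ hφ j)).union (hA hne)).subset fun x hx => ?_
    by_cases hj : x ∈ A j <;> by_cases hk : x ∈ A k <;> simp_all
  exact hι.not_ge (Cardinal.lift_mk_le_lift_mk_of_injective hφ_inj)

theorem exists_infinite_forall_not_finite_diff {ι : Type u} {B : ι → Set ℕ}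
    (hB : ∀ i, (B i).Infinite) (hι : #ι < 𝔠) :
    ∃ A : Set ℕ, A.Infinite ∧ ∀ i, ¬ (B i \ A).Finite := by
  have hmk : Cardinal.lift.{u} #(ℕ → Bool) = 𝔠 := by simp
  obtain ⟨f, hf⟩ := exists_forall_not_finite_diff_of_pairwise_finite_inter
    (fun _ _ => finite_prefixCodes_inter) hB (J := ℕ → Bool) (by simpa [hmk] using hι)
  exact ⟨prefixCodes f, prefixCodes_infinite f, hf⟩

end AlmostDisjoint

theorem downClosed_setOf_forall_not_finite_diff {ι : Type*} (a : ι → Set ℕ) :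
    DownClosed {x : Set ℕ | x.Infinite ∧ ∀ i, ¬ (a i \ x).Finite} :=
  fun _ hy _ hx hxy => ⟨hx, fun i hi => hy.2 i ((hi.union hxy).subset (sdiff_triangle _ _ _))⟩

theorem groupwiseDense_setOf_forall_not_finite_diff {ι : Type u} (a : ι → Set ℕ)
    (hι : #ι < 𝔠) (ha : ∀ i, (a i).Infinite) :
    GroupwiseDense {x : Set ℕ | x.Infinite ∧ ∀ i, ¬ (a i \ x).Finite} := by
  refine ⟨fun x hx => hx.1, downClosed_setOf_forall_not_finite_diff a, fun P => ?_⟩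
  obtain ⟨A, hA, hBA⟩ := exists_infinite_forall_not_finite_diff
    (fun i => mt (finite_of_finite_image_idx P) (ha i)) hι
  refine ⟨A, hA, ?_⟩
  rw [← idx_preimage]
  refine ⟨fun h => hA ?_, fun i h => hBA i ?_⟩
  · simpa [image_preimage_eq A (idx_surjective P)] using h.image (idx P)
  · simpa [image_sdiff_preimage] using h.image (idx P)

theorem GroupwiseDense.nonempty {G : Set (Set ℕ)} (hG : GroupwiseDense G) : G.Nonempty :=
  let ⟨_, _, hA⟩ := hG.2.2 ⟨id, rfl, strictMono_id⟩
  ⟨_, hA⟩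

/-- unif(B_M⁺) = 2^{ℵ₀}; moreover, given fewer than continuum many infinite `a i`,
the set `{x ∈ [ω]^ω : ∀ i, ¬ a i ≤ x}` is groupwise dense and contains no `a i`. -/
theorem stmt12 :
    sInf {c : Cardinal | ∃ S : Set (Set ℕ), S ⊆ InfSets ∧ #S = c ∧
        ∀ G : Set (Set ℕ), GroupwiseDense G → (S ∩ G).Nonempty} = Cardinal.continuum ∧
    ∀ (ι : Type) (a : ι → Set ℕ), #ι < Cardinal.continuum → (∀ i, (a i).Infinite) →
      GroupwiseDense {x : Set ℕ | x.Infinite ∧ ∀ i, ¬ (a i \ x).Finite} ∧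
      ∀ i, a i ∉ {x : Set ℕ | x.Infinite ∧ ∀ i, ¬ (a i \ x).Finite} := by
  have not_mem {ι : Type} (a : ι → Set ℕ) (i : ι) :
      a i ∉ {x : Set ℕ | x.Infinite ∧ ∀ i, ¬ (a i \ x).Finite} :=
    fun h => h.2 i (by simp)
  have hInfSets : #InfSets ∈ {c : Cardinal | ∃ S : Set (Set ℕ), S ⊆ InfSets ∧ #S = c ∧
      ∀ G : Set (Set ℕ), GroupwiseDense G → (S ∩ G).Nonempty} :=
    ⟨InfSets, subset_rfl, rfl, fun G hG => by rw [inter_eq_right.2 hG.1]; exact hG.nonempty⟩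
  refine ⟨le_antisymm ?_ (le_csInf ⟨_, hInfSets⟩ ?_),
    fun ι a hι ha => ⟨groupwiseDense_setOf_forall_not_finite_diff a hι ha, not_mem a⟩⟩
  · exact (csInf_le' hInfSets).trans (Cardinal.mk_set_nat ▸ Cardinal.mk_set_le _)
  · rintro _ ⟨S, hS, rfl, hmeet⟩
    by_contra! hlt
    obtain ⟨x, hxS, hxG⟩ :=
      hmeet _ (groupwiseDense_setOf_forall_not_finite_diff Subtype.val hlt fun s => hS s.2)
    exact not_mem (Subtype.val : S → Set ℕ) ⟨x, hxS⟩ hxG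
end

section
/- The least cardinality of a collection of groupwise dense subsets of [ω]^ω whose intersection is not groupwise dense equals 𝔤, the least cardinality of a collection of groupwise dense subsets of [ω]^ω whose intersection is empty. -/
open Set Cardinal MeasureTheory

/-!
If the intersection `X` of a family `S` of groupwise dense sets is not groupwise dense, some
interval partition `P` witnesses this: no union of infinitely many intervals of `P` lies in `X`.
Pulling each `G ∈ S` back along `P`, i.e. replacing it by the sets `A` of indices whose union
of intervals lies in `G`, keeps it groupwise dense (compose partitions), and the pulled-back
family, no larger than `S`, has empty intersection. Conversely an empty intersection is never
groupwise dense.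
-/

theorem Monotone.biUnion_Ico_Ico_add_one {α : Type*} [LinearOrder α] {e : ℕ → α}
    (he : Monotone e) {m n : ℕ} (hmn : m ≤ n) :
    ⋃ i ∈ Ico m n, Ico (e i) (e (i + 1)) = Ico (e m) (e n) := by
  induction n, hmn using Nat.le_induction with
  | base => simp
  | succ n hmn ih =>
    rw [← Ico_union_Ico_eq_Ico (he hmn) (he n.le_succ), ← ih,
      ← Order.succ_eq_add_one, Order.Ico_succ_right_eq_insert hmn, biUnion_insert, union_comm]

namespace IntervalPartition

variable (P Q : IntervalPartition)

def blocks (A : Set ℕ) : Set ℕ := ⋃ n ∈ A, P.I n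

theorem blocks_infinite {A : Set ℕ} (hA : A.Infinite) : (P.blocks A).Infinite :=
  (hA.image P.mono.injective.injOn).mono <| by
    rintro _ ⟨n, hn, rfl⟩
    exact mem_biUnion hn ⟨le_rfl, P.mono n.lt_succ_self⟩

theorem blocks_diff_blocks_finite {A B : Set ℕ} (h : (A \ B).Finite) :
    (P.blocks A \ P.blocks B).Finite := by
  refine (h.biUnion fun n _ => finite_Ico (P.e n) (P.e (n + 1))).subset ?_
  rintro k ⟨hkA, hkB⟩
  obtain ⟨n, hn, hk⟩ := mem_iUnion₂.mp hkA
  exact mem_biUnion ⟨hn, fun hnB => hkB (mem_biUnion hnB hk)⟩ hk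

def comp : IntervalPartition :=
  ⟨P.e ∘ Q.e, by simp [Q.zero, P.zero], P.mono.comp Q.mono⟩

theorem I_comp (m : ℕ) : (P.comp Q).I m = P.blocks (Q.I m) :=
  (P.mono.monotone.biUnion_Ico_Ico_add_one (Q.mono.monotone m.le_succ)).symm

theorem blocks_comp (A : Set ℕ) : (P.comp Q).blocks A = P.blocks (Q.blocks A) := by
  simp only [blocks, I_comp, biUnion_iUnion]

def pullback (G : Set (Set ℕ)) : Set (Set ℕ) := {A | A.Infinite ∧ P.blocks A ∈ G}

end IntervalPartition

theorem GroupwiseDense.pullback {G : Set (Set ℕ)} (hG : GroupwiseDense G)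
    (P : IntervalPartition) : GroupwiseDense (P.pullback G) := by
  obtain ⟨-, hdown, hdense⟩ := hG
  refine ⟨fun A hA => hA.1, ?_, fun Q => ?_⟩
  · rintro B ⟨-, hB⟩ A hA hAB
    exact ⟨hA, hdown _ hB _ (P.blocks_infinite hA) (P.blocks_diff_blocks_finite hAB)⟩
  · obtain ⟨A, hA, hAG⟩ := hdense (P.comp Q)
    exact ⟨A, hA, Q.blocks_infinite hA, P.blocks_comp Q A ▸ hAG⟩

theorem not_groupwiseDense_empty : ¬ GroupwiseDense ∅ := fun ⟨_, _, hdense⟩ =>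
  (hdense ⟨id, rfl, strictMono_id⟩).elim fun _ h => h.2

theorem DownClosed.inter_sInter {S : Set (Set (Set ℕ))} (hS : ∀ G ∈ S, DownClosed G) :
    DownClosed (InfSets ∩ ⋂₀ S) := fun _ ⟨_, hy⟩ x hx hxy =>
  ⟨hx, fun G hG => hS G hG _ (hy G hG) x hx hxy⟩

theorem exists_groupwiseDense_sInter_eq_empty {S : Set (Set (Set ℕ))}
    (hS : ∀ G ∈ S, GroupwiseDense G) (hX : ¬ GroupwiseDense (InfSets ∩ ⋂₀ S)) :
    ∃ S' : Set (Set (Set ℕ)), (∀ G ∈ S', GroupwiseDense G) ∧ #S' ≤ #S ∧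
      InfSets ∩ ⋂₀ S' = ∅ := by
  obtain ⟨P, hP⟩ : ∃ P : IntervalPartition, ∀ A : Set ℕ, A.Infinite →
      P.blocks A ∉ InfSets ∩ ⋂₀ S := by
    by_contra! h
    exact hX ⟨inter_subset_left, DownClosed.inter_sInter fun G hG => (hS G hG).2.1, h⟩
  refine ⟨P.pullback '' S, ?_, mk_image_le, ?_⟩
  · rintro _ ⟨G, hG, rfl⟩
    exact (hS G hG).pullback P
  · refine eq_empty_of_forall_notMem fun A ⟨hA, hAS⟩ => hP A hA ⟨P.blocks_infinite hA, ?_⟩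
    exact fun G hG => (hAS _ ⟨G, hG, rfl⟩).2

/-- add(B_M⁺) = cov(B_M⁺): the least number of groupwise dense sets with non-groupwise-dense
intersection equals 𝔤, the least number of groupwise dense sets with empty intersection. -/
theorem stmt13 :
    sInf {c : Cardinal | ∃ S : Set (Set (Set ℕ)), (∀ G ∈ S, GroupwiseDense G) ∧ #S = c ∧
      ¬ GroupwiseDense (InfSets ∩ ⋂₀ S)} = gNum := by
  refine csInf_eq_csInf_of_forall_exists_le ?_ ?_
  · rintro _ ⟨S, hS, rfl, hX⟩
    obtain ⟨S', hS', hcard, hempty⟩ := exists_groupwiseDense_sInter_eq_empty hS hX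
    exact ⟨#S', ⟨S', hS', rfl, hempty⟩, hcard⟩
  · rintro _ ⟨S, hS, rfl, hempty⟩
    exact ⟨#S, ⟨S, hS, rfl, hempty ▸ not_groupwiseDense_empty⟩, le_rfl⟩
end

section
/- Let cof(B_M^+) denote the least cardinality of a family C of groupwise dense subsets of [ω]^ω such that every groupwise dense subset of [ω]^ω includes some member of C. Then cof(B_M^+) ≥ 2^{ℵ_0} and cof(B_M^+) > 𝔟. -/
open Set Cardinal MeasureTheory

/-- The cofinality of the family of groupwise dense sets. -/
noncomputable def cofBMplus : Cardinal :=
  sInf {c : Cardinal | ∃ C : Set (Set (Set ℕ)), (∀ G ∈ C, GroupwiseDense G) ∧ #C = c ∧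
    ∀ X : Set (Set ℕ), GroupwiseDense X → ∃ G ∈ C, G ⊆ X}

/-!
Both bounds come from one diagonalization. Pick `x_G ∈ G` for each member `G` of a family `C`
of groupwise dense sets and let `X` consist of the infinite `y` that almost include no `x_G`.
No `G ∈ C` is included in `X`, so `C` is not cofinal as soon as `X` is groupwise dense, that is,
as soon as every interval partition `Q` has an infinite set `A` of indices such that each `x_G`
meets infinitely many intervals of `Q` outside `A`.

If `|C| < 𝔠`, such an `A` exists for any fewer than `𝔠` infinite sets of indices: otherwise one of
them would be almost included in two members of an almost disjoint family of size `𝔠`.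

If `𝔟 = 𝔠` and `|C| ≤ 𝔠`, fix a `≤*`-increasing scale `(f_α)_{α < 𝔠}` dominating every function,
and let `x_G` be a union of intervals of the partition generated by iterating `f_{α(G)}`. For a
given `Q`, fewer than `𝔠` of the `f_{α(G)}` fail to dominate the function sending `k` to the end
of the second `Q`-interval after the one containing `k`; for the others, `x_G` includes infinitely
many pairs of consecutive `Q`-intervals, so any `A` without two consecutive elements misses one
of each pair. Hence `cof(B_M⁺) > 𝔠 = 𝔟`, and `𝔟 < 𝔠` is covered by the first case.
-/

open Filter

namespace IntervalPartition

variable (P : IntervalPartition)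

lemma e_idx_le (k : ℕ) : P.e (idx P k) ≤ k :=
  Nat.findGreatest_spec (P := fun n => P.e n ≤ k) k.zero_le (by simp [P.zero])

lemma lt_e_idx_add_one (k : ℕ) : k < P.e (idx P k + 1) := by
  by_contra! h
  exact Nat.findGreatest_is_greatest (Nat.lt_succ_self _) ((P.mono.id_le _).trans h) h

lemma mem_I_idx (k : ℕ) : k ∈ P.I (idx P k) :=
  ⟨P.e_idx_le k, P.lt_e_idx_add_one k⟩

lemma idx_eq_of_mem_I {k n : ℕ} (h : k ∈ P.I n) : idx P k = n := by
  have h₁ := P.mono.lt_iff_lt.mp (h.1.trans_lt (P.lt_e_idx_add_one k))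
  have h₂ := P.mono.lt_iff_lt.mp ((P.e_idx_le k).trans_lt h.2)
  omega

lemma le_idx {N k : ℕ} (h : P.e N ≤ k) : N ≤ idx P k :=
  Nat.le_findGreatest ((P.mono.id_le N).trans h) h

lemma e_mem_I (n : ℕ) : P.e n ∈ P.I n :=
  ⟨le_rfl, P.mono n.lt_succ_self⟩

lemma I_subset_Ico {a b m : ℕ} (ha : idx P a < m) (hb : P.e (m + 1) ≤ b) :
    P.I m ⊆ Ico a b := fun _ hk =>
  ⟨(P.lt_e_idx_add_one a).le.trans ((P.mono.monotone ha).trans hk.1), hk.2.trans_le hb⟩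

lemma infinite_biUnion_I {A : Set ℕ} (hA : A.Infinite) : (⋃ n ∈ A, P.I n).Infinite :=
  (hA.image P.mono.injective.injOn).mono <| by
    rintro _ ⟨n, hn, rfl⟩
    exact mem_biUnion hn (P.e_mem_I n)

def hits (x : Set ℕ) : Set ℕ := {n | (x ∩ P.I n).Nonempty}

lemma mem_hits_of_I_subset {x : Set ℕ} {n : ℕ} (h : P.I n ⊆ x) : n ∈ P.hits x :=
  ⟨P.e n, h (P.e_mem_I n), P.e_mem_I n⟩

lemma infinite_hits {x : Set ℕ} (hx : x.Infinite) : (P.hits x).Infinite := fun hfin =>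
  hx <| (hfin.biUnion fun n _ => (finite_Ico _ _ : (P.I n).Finite)).subset fun k hk =>
    mem_biUnion ⟨k, hk, P.mem_I_idx k⟩ (P.mem_I_idx k)

lemma infinite_diff_biUnion_I {x A : Set ℕ} (h : (P.hits x \ A).Infinite) :
    (x \ ⋃ n ∈ A, P.I n).Infinite := fun hfin =>
  h <| (hfin.image (idx P)).subset <| by
    rintro n ⟨⟨k, hkx, hkn⟩, hnA⟩
    refine ⟨k, ⟨hkx, fun hkA => hnA ?_⟩, P.idx_eq_of_mem_I hkn⟩
    obtain ⟨m, hmA, hkm⟩ := mem_iUnion₂.mp hkA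
    rwa [← P.idx_eq_of_mem_I hkn, P.idx_eq_of_mem_I hkm]

lemma infinite_hits_diff {x A : Set ℕ} (hA : ∀ m ∈ A, m + 1 ∉ A)
    (hx : ∃ᶠ m in atTop, P.I m ⊆ x ∧ P.I (m + 1) ⊆ x) : (P.hits x \ A).Infinite := by
  refine Nat.frequently_atTop_iff_infinite.mp <| frequently_atTop.mpr fun N => ?_
  obtain ⟨m, hNm, hm, hm₁⟩ := frequently_atTop.mp hx N
  by_cases hmA : m ∈ A
  · exact ⟨m + 1, by omega, P.mem_hits_of_I_subset hm₁, hA m hmA⟩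
  · exact ⟨m, hNm, P.mem_hits_of_I_subset hm, hmA⟩

lemma frequently_I_subset_biUnion_I (Q : IntervalPartition) {B : Set ℕ} (hB : B.Infinite)
    (hlong : ∀ᶠ n in atTop, Q.e (idx Q (P.e n) + 3) ≤ P.e (n + 1)) :
    ∃ᶠ m in atTop, Q.I m ⊆ ⋃ n ∈ B, P.I n ∧ Q.I (m + 1) ⊆ ⋃ n ∈ B, P.I n := by
  obtain ⟨K, hK⟩ := eventually_atTop.mp hlong
  refine frequently_atTop.mpr fun N => ?_
  obtain ⟨n, hnB, hn⟩ := hB.exists_gt (max K (Q.e N))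
  have hn_le : n ≤ P.e n := P.mono.id_le n
  have hN : N ≤ idx Q (P.e n) := Q.le_idx (by omega)
  have hPn : P.I n ⊆ ⋃ n ∈ B, P.I n := subset_biUnion_of_mem (u := P.I) hnB
  have hQP := hK n (by omega)
  refine ⟨idx Q (P.e n) + 1, by omega, ?_, ?_⟩
  · exact (Q.I_subset_Ico (by omega) ((Q.mono.monotone (by omega)).trans hQP)).trans hPn
  · exact (Q.I_subset_Ico (by omega) hQP).trans hPn

def ofIterate (f : ℕ → ℕ) (hf : ∀ k, k < f k) : IntervalPartition where
  e n := f^[n] 0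
  zero := rfl
  mono := strictMono_nat_of_lt_succ fun n => by
    rw [Function.iterate_succ_apply']
    exact hf _

lemma ofIterate_e_add_one (f : ℕ → ℕ) (hf : ∀ k, k < f k) (n : ℕ) :
    (ofIterate f hf).e (n + 1) = f ((ofIterate f hf).e n) :=
  Function.iterate_succ_apply' f n 0

end IntervalPartition

lemma Set.Infinite.exists_subset_forall_add_one_notMem {A : Set ℕ} (hA : A.Infinite) :
    ∃ A' ⊆ A, A'.Infinite ∧ ∀ m ∈ A', m + 1 ∉ A' := by
  have hA' : A = {a ∈ A | Even a} ∪ {a ∈ A | ¬ Even a} := by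
    ext a
    simp only [mem_union, mem_sep_iff]
    tauto
  rcases infinite_union.mp (hA' ▸ hA) with h | h
  · exact ⟨_, sep_subset _ _, h, fun m hm hm₁ => Nat.even_add_one.mp hm₁.2 hm.2⟩
  · exact ⟨_, sep_subset _ _, h, fun m hm hm₁ => hm₁.2 (Nat.even_add_one.mpr hm.2)⟩

lemma mk_nat_to_bool : #(ℕ → Bool) = 𝔠 := by
  rw [← Cardinal.power_def, Cardinal.mk_bool, Cardinal.mk_nat, Cardinal.two_power_aleph0]

lemma mk_nat_to_nat : #(ℕ → ℕ) = 𝔠 := by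
  rw [← Cardinal.power_def, Cardinal.mk_nat, Cardinal.power_self_eq le_rfl,
    Cardinal.two_power_aleph0]

/-- For distinct branches `r` these sets are almost disjoint: a family of size `𝔠`. -/
noncomputable def branchCodes (r : ℕ → Bool) : Set ℕ :=
  range fun n => Encodable.encode (List.ofFn fun q : Fin n => r q)

lemma infinite_branchCodes (r : ℕ → Bool) : (branchCodes r).Infinite :=
  infinite_range_of_injective fun n m hnm => by
    simpa using congrArg List.length (Encodable.encode_injective hnm)

lemma finite_branchCodes_inter {r r' : ℕ → Bool} (hne : r ≠ r') :
    (branchCodes r ∩ branchCodes r').Finite := by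
  obtain ⟨k, hk⟩ := Function.ne_iff.mp hne
  refine ((finite_Iic k).image fun n => Encodable.encode (List.ofFn fun q : Fin n => r q)).subset ?_
  rintro _ ⟨⟨n, rfl⟩, ⟨m, hm⟩⟩
  have hpe := Encodable.encode_injective hm
  obtain rfl : m = n := by simpa using congrArg List.length hpe
  refine ⟨m, mem_Iic.mpr ?_, rfl⟩
  by_contra! hkm
  exact hk (congrFun (List.ofFn_inj.mp hpe) ⟨k, hkm⟩).symm

lemma exists_infinite_forall_infinite_diff {ι : Type} (T : ι → Set ℕ) (hι : #ι < 𝔠)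
    (hT : ∀ i, (T i).Infinite) : ∃ A : Set ℕ, A.Infinite ∧ ∀ i, (T i \ A).Infinite := by
  by_contra! h
  choose i hi using fun r => h (branchCodes r) (infinite_branchCodes r)
  refine (Cardinal.mk_le_of_injective (f := i) fun r r' hrr' => ?_).not_gt (mk_nat_to_bool ▸ hι)
  by_contra hne
  have hr' := hi r'
  rw [← hrr'] at hr'
  refine hT (i r) (((hi r).union (hr'.union (finite_branchCodes_inter hne))).subset fun t ht => ?_)
  by_cases h : t ∈ branchCodes r <;> by_cases h' : t ∈ branchCodes r' <;> simp_all

def nonCovering {ι : Type*} (x : ι → Set ℕ) : Set (Set ℕ) :=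
  {y | y.Infinite ∧ ∀ i, (x i \ y).Infinite}

lemma groupwiseDense_nonCovering {ι : Type*} (x : ι → Set ℕ)
    (h : ∀ Q : IntervalPartition, ∃ A : Set ℕ, A.Infinite ∧ ∀ i, (Q.hits (x i) \ A).Infinite) :
    GroupwiseDense (nonCovering x) := by
  refine ⟨fun y hy => hy.1, fun y hy z hz hzy => ⟨hz, fun i hfin => ?_⟩, fun Q => ?_⟩
  · exact hy.2 i ((hfin.union hzy).subset (sdiff_triangle (x i) z y))
  · obtain ⟨A, hA, hAx⟩ := h Q
    exact ⟨A, hA, Q.infinite_biUnion_I hA, fun i => Q.infinite_diff_biUnion_I (hAx i)⟩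

lemma not_groupwiseDense_nonCovering {C : Set (Set (Set ℕ))}
    (hcof : ∀ X : Set (Set ℕ), GroupwiseDense X → ∃ G ∈ C, G ⊆ X)
    {x : C → Set ℕ} (hx : ∀ G : C, x G ∈ (G : Set (Set ℕ))) : ¬ GroupwiseDense (nonCovering x) :=
  fun hX => by
    obtain ⟨G, hGC, hGX⟩ := hcof _ hX
    simpa using (hGX (hx ⟨G, hGC⟩)).2 ⟨G, hGC⟩

lemma bNum_le_continuum : bNum ≤ 𝔠 := by
  unfold bNum
  exact csInf_le' ⟨univ, by rw [mk_univ, mk_nat_to_nat], fun g => ⟨g + 1, mem_univ _, fun h => by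
    obtain ⟨k, hk⟩ := h.exists
    simp at hk⟩⟩

lemma exists_evMaj_of_mk_lt_bNum {S : Set (ℕ → ℕ)} (hS : #S < bNum) :
    ∃ g, ∀ f ∈ S, EvMaj f g := by
  by_contra! h
  exact (csInf_le' ⟨S, rfl, h⟩ : bNum ≤ #S).not_gt hS

/-- Transfinite recursion along a well-order of `ℕ → ℕ` of type `𝔠`, each term bounding all
earlier ones. -/
lemma exists_scale (hb : 𝔠 ≤ bNum) :
    ∃ f : (ℕ → ℕ) → ℕ → ℕ, (∀ g k, g k < f g k ∧ k < f g k) ∧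
      ∀ g, #{h | ¬ EvMaj g (f h)} < 𝔠 := by
  obtain ⟨r, _, hr⟩ := Cardinal.exists_ord_eq (ℕ → ℕ)
  have hseg (g : ℕ → ℕ) : #{h | r h g} < 𝔠 := mk_nat_to_nat ▸ Cardinal.card_typein_lt g hr
  have hbound (g : ℕ → ℕ) (u : {h // r h g} → ℕ → ℕ) : ∃ b, ∀ h, EvMaj (u h) b := by
    obtain ⟨b, hb⟩ := exists_evMaj_of_mk_lt_bNum (mk_range_le.trans_lt ((hseg g).trans_le hb))
    exact ⟨b, fun h => hb _ ⟨h, rfl⟩⟩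
  choose bound hbound using hbound
  let f : (ℕ → ℕ) → ℕ → ℕ := IsWellFounded.wf.fix (r := r) fun g IH k =>
    max (bound g (fun h => IH h.1 h.2) k) (g k) + k + 1
  have hf (g k) : f g k = max (bound g (fun h => f h.1) k) (g k) + k + 1 :=
    congrFun (WellFounded.fix_eq (C := fun _ => ℕ → ℕ) _ _ g) k
  have hf_gt (g : ℕ → ℕ) (k : ℕ) : g k < f g k ∧ k < f g k := by
    rw [hf]
    omega
  have hf_mono (g h : ℕ → ℕ) (hhg : r h g) : EvMaj (f h) (f g) :=
    (hbound g (fun h => f h.1) ⟨h, hhg⟩).mono fun k (hk : f h k ≤ _) => by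
      rw [hf g k]
      omega
  refine ⟨f, hf_gt, fun g => (mk_le_mk_of_subset fun h hh => ?_).trans_lt (hseg g)⟩
  have hg : EvMaj g (f g) := Eventually.of_forall fun k => (hf_gt g k).1.le
  rcases trichotomous_of r h g with hhg | rfl | hgh
  · exact hhg
  · exact absurd hg hh
  · exact absurd ((hg.and (hf_mono h g hgh)).mono fun _ hk => hk.1.trans hk.2) hh

lemma continuum_le_mk_of_cofinal {C : Set (Set (Set ℕ))} (hC : ∀ G ∈ C, GroupwiseDense G)
    (hcof : ∀ X : Set (Set ℕ), GroupwiseDense X → ∃ G ∈ C, G ⊆ X) : 𝔠 ≤ #C := by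
  by_contra! hlt
  have hne (G : C) : (G : Set (Set ℕ)).Nonempty :=
    let ⟨_, _, hA⟩ := (hC G G.2).2.2 ⟨id, rfl, strictMono_id⟩
    ⟨_, hA⟩
  choose x hx using hne
  refine not_groupwiseDense_nonCovering hcof hx (groupwiseDense_nonCovering x fun Q => ?_)
  exact exists_infinite_forall_infinite_diff _ hlt fun G => Q.infinite_hits ((hC G G.2).1 (hx G))

lemma continuum_lt_mk_of_cofinal (hb : 𝔠 ≤ bNum) {C : Set (Set (Set ℕ))}
    (hC : ∀ G ∈ C, GroupwiseDense G)
    (hcof : ∀ X : Set (Set ℕ), GroupwiseDense X → ∃ G ∈ C, G ⊆ X) : 𝔠 < #C := by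
  by_contra! hle
  obtain ⟨f, hf, hsmall⟩ := exists_scale hb
  obtain ⟨j⟩ := (Cardinal.le_def _ _).mp (hle.trans_eq mk_nat_to_nat.symm)
  let P (G : C) : IntervalPartition := .ofIterate (f (j G)) fun k => (hf _ k).2
  choose B hB hBG using fun G : C => (hC G G.2).2.2 (P G)
  let x (G : C) : Set ℕ := ⋃ n ∈ B G, (P G).I n
  refine not_groupwiseDense_nonCovering hcof (x := x) hBG
    (groupwiseDense_nonCovering _ fun Q => ?_)
  let D := {G : C | ¬ EvMaj (fun k => Q.e (idx Q k + 3)) (f (j G))}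
  have hD : #D < 𝔠 := (Cardinal.mk_preimage_of_injective _ _ j.injective).trans_lt (hsmall _)
  obtain ⟨A₀, hA₀, hA₀D⟩ := exists_infinite_forall_infinite_diff (fun G : D => Q.hits (x G)) hD
    fun G => Q.infinite_hits ((hC G G.1.2).1 (hBG G))
  obtain ⟨A, hAA₀, hA, hA_succ⟩ := hA₀.exists_subset_forall_add_one_notMem
  refine ⟨A, hA, fun G => ?_⟩
  by_cases hGD : G ∈ D
  · exact (hA₀D ⟨G, hGD⟩).mono (sdiff_subset_sdiff_right hAA₀)
  · refine Q.infinite_hits_diff hA_succ ((P G).frequently_I_subset_biUnion_I Q (hB G) ?_)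
    refine ((P G).mono.tendsto_atTop.eventually (not_not.mp hGD)).mono fun n hn => ?_
    rwa [IntervalPartition.ofIterate_e_add_one]

lemma exists_cofinal_mk_eq_cofBMplus : ∃ C : Set (Set (Set ℕ)), (∀ G ∈ C, GroupwiseDense G) ∧
    #C = cofBMplus ∧ ∀ X : Set (Set ℕ), GroupwiseDense X → ∃ G ∈ C, G ⊆ X := by
  have hne : {c : Cardinal | ∃ C : Set (Set (Set ℕ)), (∀ G ∈ C, GroupwiseDense G) ∧ #C = c ∧
      ∀ X : Set (Set ℕ), GroupwiseDense X → ∃ G ∈ C, G ⊆ X}.Nonempty :=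
    ⟨_, {X | GroupwiseDense X}, fun _ h => h, rfl, fun X hX => ⟨X, hX, subset_rfl⟩⟩
  exact csInf_mem hne

/-- Theorem 5: cof(B_M⁺) ≥ 2^{ℵ₀} and cof(B_M⁺) > 𝔟. -/
theorem stmt14 : Cardinal.continuum ≤ cofBMplus ∧ bNum < cofBMplus := by
  obtain ⟨C, hC, hCcard, hcof⟩ := exists_cofinal_mk_eq_cofBMplus
  rw [← hCcard]
  have hcont := continuum_le_mk_of_cofinal hC hcof
  refine ⟨hcont, ?_⟩
  rcases lt_or_ge bNum 𝔠 with hb | hb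
  · exact hb.trans_le hcont
  · exact bNum_le_continuum.trans_lt (continuum_lt_mk_of_cofinal hb hC hcof)
end

section
/- Assume cov(L) = cof(L), where L is the σ-ideal of measure-zero subsets of 2^ω for the uniform product measure. Then there exist two downward-closed subsets X, Y of [ω]^ω, each of positive outer measure, such that X ∩ Y has measure zero. -/
open Set Cardinal MeasureTheory

/-!
Let `κ = cov(L) = cof(L)` and enumerate a cofinal family of null sets as `(N t)_{t < κ}`. By
recursion on `t` choose infinite `x t, y t ⊆ ω` outside every `N s` with `s < t`; this is
possible because fewer than `cov(L)` null sets never cover `2^ω`. In addition require that `x t`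
and `y t` have density at most `3/5`, that `y t` has density at most `3/5` inside `x s` for
`s ≤ t`, and `x t` inside `y s` for `s < t`. Each extra requirement only excludes a null set, by
counting cylinders and Borel–Cantelli.

Let `X`, `Y` be the downward closures of `{x t}` and `{y t}`. A null set lies in some `N s`, which
misses `x t` and `y t` for `t > s`, so neither `X` nor `Y` is null. Every `w ∈ X ∩ Y` is almost
included in some `x s ∩ y t`, whose density is at most `(3/5)² < 2/5`; so `X ∩ Y` lies in the null
set of points whose complement has density at least `3/5` infinitely often.
-/

open Filter
open scoped ENNReal

universe u

section NullIdeal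

variable {α : Type u} [MeasurableSpace α] (μ : Measure α)

noncomputable def nullCov : Cardinal :=
  sInf {c : Cardinal | ∃ S : Set (Set α), (∀ A ∈ S, μ A = 0) ∧ #S = c ∧ ⋃₀ S = Set.univ}

noncomputable def nullCof : Cardinal :=
  sInf {c : Cardinal | ∃ C : Set (Set α), (∀ A ∈ C, μ A = 0) ∧ #C = c ∧
    ∀ A : Set α, μ A = 0 → ∃ B ∈ C, A ⊆ B}

variable {μ}

theorem aleph0_lt_nullCov (huniv : μ univ ≠ 0) (hsingleton : ∀ x, μ {x} = 0) :
    ℵ₀ < nullCov μ := by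
  obtain ⟨S, hS, hcard, hcover⟩ : nullCov μ ∈ _ := csInf_mem
    ⟨_, range fun x => {x}, by rintro _ ⟨x, rfl⟩; exact hsingleton x, rfl, by
      rw [sUnion_range, iUnion_of_singleton]⟩
  by_contra! hle
  have hS_countable : S.Countable := by
    rw [← le_aleph0_iff_set_countable, hcard]
    exact hle
  apply huniv
  rw [← hcover, sUnion_eq_biUnion]
  exact (measure_biUnion_null_iff hS_countable).2 hS

theorem exists_notMem_forall_notMem_of_mk_lt_nullCov (hK : ℵ₀ < nullCov μ) {ι : Type u}
    {g : ι → Set α} (hι : #ι < nullCov μ) (hg : ∀ i, μ (g i) = 0) {E : Set α} (hE : μ E = 0) :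
    ∃ x ∉ E, ∀ i, x ∉ g i := by
  let g' : Option ι → Set α := fun i => i.elim E g
  suffices ∃ x, ∀ i, x ∉ g' i by
    obtain ⟨x, hx⟩ := this
    exact ⟨x, hx none, fun i => hx (some i)⟩
  by_contra! hcover
  have hle : nullCov μ ≤ #(range g') :=
    csInf_le' ⟨range g', by rintro _ ⟨(_ | i), rfl⟩; exacts [hE, hg i], rfl,
      eq_univ_of_forall fun x => by obtain ⟨i, hi⟩ := hcover x; exact ⟨_, ⟨i, rfl⟩, hi⟩⟩
  have hlt : #(Option ι) < nullCov μ := by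
    rw [mk_option]
    exact add_lt_of_lt hK.le hι (one_lt_aleph0.trans hK)
  exact (hle.trans mk_range_le).not_gt hlt

theorem exists_cofinal_family_indexed_by_nullCof :
    ∃ N : (nullCof μ).ord.ToType → Set α,
      (∀ t, μ (N t) = 0) ∧ ∀ A, μ A = 0 → ∃ t, A ⊆ N t := by
  obtain ⟨C, hC, hcard, hcofinal⟩ : nullCof μ ∈ _ := csInf_mem
    ⟨_, {A | μ A = 0}, fun A hA => hA, rfl, fun A hA => ⟨A, hA, subset_rfl⟩⟩
  obtain ⟨e⟩ : Nonempty ((nullCof μ).ord.ToType ≃ C) := by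
    rw [← Cardinal.eq, mk_ord_toType, hcard]
  refine ⟨fun t => e t, fun t => hC _ (e t).2, fun A hA => ?_⟩
  obtain ⟨B, hB, hAB⟩ := hcofinal A hA
  exact ⟨e.symm ⟨B, hB⟩, by simpa using hAB⟩

theorem measure_ne_zero_of_forall_gt_notMem {T : Type*} [Preorder T] [NoMaxOrder T]
    {N : T → Set α} (hN : ∀ A, μ A = 0 → ∃ t, A ⊆ N t) {S : Set α} {p : T → α}
    (hpS : ∀ t, p t ∈ S) (hpN : ∀ s t, s < t → p t ∉ N s) : μ S ≠ 0 := by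
  intro hS
  obtain ⟨s, hs⟩ := hN S hS
  obtain ⟨t, hst⟩ := exists_gt s
  exact hpN s t hst (hs (hpS t))

end NullIdeal

theorem WellFoundedLT.exists_forall_of_forall_exists {T β : Type*} [Preorder T] [WellFoundedLT T]
    (Q : β → Prop) (R : (t : T) → (Iio t → β) → β → Prop)
    (h : ∀ t (f : Iio t → β), (∀ s, Q (f s)) → ∃ b, Q b ∧ R t f b) :
    ∃ F : T → β, ∀ t, Q (F t) ∧ R t (fun s => F s) (F t) := by
  let step (t : T) (f : ∀ s < t, {b // Q b}) : {b // Q b} :=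
    ⟨(h t (fun s => f s.1 s.2) (fun s => (f s.1 s.2).2)).choose,
      (h t (fun s => f s.1 s.2) (fun s => (f s.1 s.2).2)).choose_spec.1⟩
  let F : T → {b // Q b} := wellFounded_lt.fix step
  refine ⟨fun t => F t, fun t => ⟨(F t).2, ?_⟩⟩
  have hF : F t = step t (fun s _ => F s) := wellFounded_lt.fix_eq step t
  show R t (fun s => (F s).1) (F t).1
  rw [hF]
  exact (h t (fun s => (F s).1) (fun s => (F s).2)).choose_spec.2

theorem chi_apply_eq_true {x : Set ℕ} {n : ℕ} : chi x n = true ↔ n ∈ x := by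
  simp [chi]

theorem chi_apply_eq_false {x : Set ℕ} {n : ℕ} : chi x n = false ↔ n ∉ x := by
  simp [chi]

theorem chi_setOf_eq_true (p : ℕ → Bool) : chi {n | p n = true} = p := by
  funext n
  cases h : p n <;> simp [chi, h]

theorem Nat.count_comp_nth (p q : ℕ → Prop) [DecidablePred p] [DecidablePred q] (n : ℕ) :
    Nat.count (fun j => q (Nat.nth p j)) (Nat.count p n) = Nat.count (fun i => p i ∧ q i) n := by
  induction n with
  | zero => simp
  | succ n ih =>
    by_cases hn : p n
    · simp [Nat.count_succ, hn, Nat.nth_count hn, ih]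
    · simp [Nat.count_succ, hn, ih]

theorem Nat.count_add_count_not (p : ℕ → Prop) [DecidablePred p] (n : ℕ) :
    Nat.count p n + Nat.count (fun i => ¬p i) n = n := by
  induction n with
  | zero => simp
  | succ n ih => by_cases hn : p n <;> simp [Nat.count_succ, hn] <;> omega

theorem Nat.count_le_count_add_count {p q r : ℕ → Prop} [DecidablePred p] [DecidablePred q]
    [DecidablePred r] (h : ∀ i, p i → q i ∨ r i) (n : ℕ) :
    Nat.count p n ≤ Nat.count q n + Nat.count r n := by
  induction n with
  | zero => simp
  | succ n ih =>
    simp only [Nat.count_succ]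
    have := h n
    split_ifs <;> simp_all <;> omega

def denseAlong (a : ℕ → ℕ) (b : Bool) : Set (ℕ → Bool) :=
  {p | ∃ᶠ m in atTop, 3 * m ≤ Nat.count (fun j => p (a j) = b) (5 * m)}

section Density

open scoped Classical

theorem exists_bound_of_chi_notMem_denseAlong {x : Set ℕ} {a : ℕ → ℕ}
    (h : chi x ∉ denseAlong a true) :
    ∃ C, ∀ n, 5 * Nat.count (fun j => a j ∈ x) n ≤ 3 * n + C := by
  simp only [denseAlong, Set.mem_ofPred_eq, not_frequently, not_le, chi_apply_eq_true] at h
  obtain ⟨k, hk⟩ := eventually_atTop.1 h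
  refine ⟨15 * (k + 1), fun n => ?_⟩
  have hn := hk (n / 5 + 1 + k) (by omega)
  have hmono := Nat.count_monotone (fun j => a j ∈ x) (show n ≤ 5 * (n / 5 + 1 + k) by omega)
  omega

theorem infinite_of_chi_notMem_denseAlong_id_false {x : Set ℕ}
    (h : chi x ∉ denseAlong id false) : x.Infinite := by
  intro hfin
  apply h
  simp only [denseAlong, Set.mem_ofPred_eq, id, chi_apply_eq_false]
  refine frequently_atTop.2 fun k => ⟨k + hfin.toFinset.card, by omega, ?_⟩
  have hx := Nat.count_le_card (p := (· ∈ x)) hfin (5 * (k + hfin.toFinset.card))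
  have hsum := Nat.count_add_count_not (· ∈ x) (5 * (k + hfin.toFinset.card))
  omega

theorem chi_mem_denseAlong_id_false_of_bound {w : Set ℕ} {C : ℕ}
    (h : ∀ n, 25 * Nat.count (· ∈ w) n ≤ 9 * n + C) : chi w ∈ denseAlong id false := by
  simp only [denseAlong, Set.mem_ofPred_eq, id, chi_apply_eq_false]
  refine frequently_atTop.2 fun k => ⟨k + C, by omega, ?_⟩
  have hw := h (5 * (k + C))
  have hsum := Nat.count_add_count_not (· ∈ w) (5 * (k + C))
  omega

theorem chi_mem_denseAlong_id_false {x y w : Set ℕ} (hx : chi x ∉ denseAlong id true)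
    (hy : chi y ∉ denseAlong (Nat.nth (· ∈ x)) true) (hw : (w \ (x ∩ y)).Finite) :
    chi w ∈ denseAlong id false := by
  obtain ⟨C₁, h₁⟩ := exists_bound_of_chi_notMem_denseAlong hx
  obtain ⟨C₂, h₂⟩ := exists_bound_of_chi_notMem_denseAlong hy
  refine chi_mem_denseAlong_id_false_of_bound (C := 3 * C₁ + 5 * C₂ + 25 * hw.toFinset.card)
    fun n => ?_
  have hx := h₁ n
  have hy := h₂ (Nat.count (· ∈ x) n)
  have hxy := Nat.count_comp_nth (· ∈ x) (· ∈ y) n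
  have hw' := Nat.count_le_count_add_count (p := (· ∈ w)) (q := fun i => i ∈ x ∧ i ∈ y)
    (r := (· ∈ w \ (x ∩ y))) (fun i hi => by by_cases i ∈ x ∧ i ∈ y <;> simp_all) n
  have hfin := Nat.count_le_card (p := (· ∈ w \ (x ∩ y))) hw n
  simp only [id] at hx
  omega

end Density

section AlmostBelow

variable {T : Type*}

def almostBelow (z : T → Set ℕ) : Set (Set ℕ) :=
  {w | w.Infinite ∧ ∃ t, (w \ z t).Finite}

theorem almostBelow_subset_infSets (z : T → Set ℕ) : almostBelow z ⊆ InfSets :=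
  fun _ hw => hw.1

theorem downClosed_almostBelow (z : T → Set ℕ) : DownClosed (almostBelow z) := by
  rintro y ⟨-, t, hyt⟩ x hx hxy
  refine ⟨hx, t, (hxy.union hyt).subset fun i ⟨hix, hit⟩ => ?_⟩
  by_cases hiy : i ∈ y
  exacts [Or.inr ⟨hiy, hit⟩, Or.inl ⟨hix, hiy⟩]

theorem self_mem_almostBelow {z : T → Set ℕ} {t : T} (hz : (z t).Infinite) :
    z t ∈ almostBelow z :=
  ⟨hz, t, by simp⟩

theorem chi_image_almostBelow_inter_subset [LinearOrder T] {x y : T → Set ℕ}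
    (hx : ∀ t, chi (x t) ∉ denseAlong id true) (hy : ∀ t, chi (y t) ∉ denseAlong id true)
    (hyx : ∀ t, chi (y t) ∉ denseAlong (Nat.nth (· ∈ x t)) true)
    (hyx_lt : ∀ s t, s < t → chi (y t) ∉ denseAlong (Nat.nth (· ∈ x s)) true)
    (hxy_lt : ∀ s t, s < t → chi (x t) ∉ denseAlong (Nat.nth (· ∈ y s)) true) :
    chi '' (almostBelow x ∩ almostBelow y) ⊆ denseAlong id false := by
  rintro _ ⟨w, ⟨⟨-, s, hs⟩, -, t, ht⟩, rfl⟩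
  have hw : (w \ (x s ∩ y t)).Finite := by
    rw [sdiff_inter]
    exact hs.union ht
  rcases lt_trichotomy s t with hst | rfl | hts
  · exact chi_mem_denseAlong_id_false (hx s) (hyx_lt s t hst) hw
  · exact chi_mem_denseAlong_id_false (hx s) (hyx s) hw
  · exact chi_mem_denseAlong_id_false (hy t) (hxy_lt t s hts) (by rwa [inter_comm])

end AlmostBelow

/-- The requirements on the pair chosen at stage `t`, given the earlier pairs `f`. Each one
excludes a null set, and fewer than `cov(L)` of them are imposed. -/
structure IsGoodPair {T : Type*} [Preorder T] (N : T → Set (ℕ → Bool)) (t : T)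
    (f : Iio t → Set ℕ × Set ℕ) (x y : Set ℕ) : Prop where
  fst_sparse : chi x ∉ denseAlong id true
  snd_sparse : chi y ∉ denseAlong id true
  snd_sparse_along_fst : chi y ∉ denseAlong (Nat.nth (· ∈ x)) true
  fst_notMem : ∀ s : Iio t, chi x ∉ N s
  snd_notMem : ∀ s : Iio t, chi y ∉ N s
  fst_sparse_along : ∀ s, chi x ∉ denseAlong (Nat.nth (· ∈ (f s).2)) true
  snd_sparse_along : ∀ s, chi y ∉ denseAlong (Nat.nth (· ∈ (f s).1)) true

theorem Finset.card_filter_powerset_mul_two_pow_le {ι : Type*} (s : Finset ι) (k : ℕ) :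
    (s.powerset.filter (k ≤ ·.card)).card * 2 ^ k ≤ 3 ^ s.card := by
  calc (s.powerset.filter (k ≤ ·.card)).card * 2 ^ k
      = ∑ B ∈ s.powerset.filter (k ≤ ·.card), 2 ^ k := by rw [Finset.sum_const, smul_eq_mul]
    _ ≤ ∑ B ∈ s.powerset.filter (k ≤ ·.card), 2 ^ B.card * 1 ^ (s.card - B.card) :=
        Finset.sum_le_sum fun B hB => by
          simpa using Nat.pow_le_pow_right two_pos (Finset.mem_filter.1 hB).2
    _ ≤ ∑ B ∈ s.powerset, 2 ^ B.card * 1 ^ (s.card - B.card) :=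
        Finset.sum_le_sum_of_subset (Finset.filter_subset _ _)
    _ = 3 ^ s.card := by rw [Finset.sum_pow_mul_eq_add_pow]

section CylinderMeasure

variable {μ : Measure (ℕ → Bool)}
  (hμ : ∀ (s : Finset ℕ) (f : ℕ → Bool), μ {y | ∀ n ∈ s, y n = f n} = (1 / 2) ^ s.card)
include hμ

theorem measure_univ_eq_one_of_cylinder : μ univ = 1 := by
  simpa using hμ ∅ (fun _ => true)

theorem measure_singleton_eq_zero_of_cylinder (p : ℕ → Bool) : μ {p} = 0 := by
  refine le_antisymm (ge_of_tendsto'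
    (ENNReal.tendsto_pow_atTop_nhds_zero_of_lt_one ENNReal.one_half_lt_one) fun k => ?_) zero_le
  calc μ {p} ≤ μ {y | ∀ n ∈ Finset.range k, y n = p n} := measure_mono (by rintro _ rfl; simp)
    _ = 2⁻¹ ^ k := by rw [hμ, Finset.card_range, one_div]

theorem measure_setOf_count_le {a : ℕ → ℕ} (ha : Function.Injective a) (b : Bool) (n : ℕ)
    (P : ℕ → Prop) [DecidablePred P] :
    μ {p | P (Nat.count (fun j => p (a j) = b) n)} ≤
      ((Finset.range n).powerset.filter (P ·.card)).card * 2⁻¹ ^ n := by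
  classical
  let cylinder (B : Finset ℕ) : Set (ℕ → Bool) :=
    {y | ∀ i ∈ (Finset.range n).image a, y i = if i ∈ B.image a then b else !b}
  calc μ {p | P (Nat.count (fun j => p (a j) = b) n)}
      ≤ μ (⋃ B ∈ (Finset.range n).powerset.filter (P ·.card), cylinder B) := by
        refine measure_mono fun p hp => mem_biUnion (x := {j ∈ Finset.range n | p (a j) = b}) ?_ ?_
        · simpa [Nat.count_eq_card_filter_range] using hp
        · rintro _ hi
          obtain ⟨j, hj, rfl⟩ := Finset.mem_image.1 hi
          simp only [ha.mem_finset_image, Finset.mem_filter, hj, true_and]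
          cases p (a j) <;> cases b <;> rfl
    _ ≤ ∑ B ∈ (Finset.range n).powerset.filter (P ·.card), μ (cylinder B) :=
        measure_biUnion_finset_le _ _
    _ = ((Finset.range n).powerset.filter (P ·.card)).card * 2⁻¹ ^ n := by
        simp only [cylinder, hμ, Finset.card_image_of_injective _ ha, Finset.card_range, one_div,
          Finset.sum_const, nsmul_eq_mul]

theorem measure_setOf_three_le_count_le {a : ℕ → ℕ} (ha : Function.Injective a) (b : Bool)
    (m : ℕ) :
    μ {p | 3 * m ≤ Nat.count (fun j => p (a j) = b) (5 * m)} ≤ (3 ^ 5 * 2⁻¹ ^ 8) ^ m := by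
  set c := ((Finset.range (5 * m)).powerset.filter (3 * m ≤ ·.card)).card
  have hc : (c * 2 ^ (3 * m) : ℝ≥0∞) ≤ 3 ^ (5 * m) := by
    have := Finset.card_filter_powerset_mul_two_pow_le (Finset.range (5 * m)) (3 * m)
    rw [Finset.card_range] at this
    exact_mod_cast this
  calc μ {p | 3 * m ≤ Nat.count (fun j => p (a j) = b) (5 * m)}
      ≤ c * 2⁻¹ ^ (5 * m) := measure_setOf_count_le hμ ha b _ _
    _ = c * 2 ^ (3 * m) * 2⁻¹ ^ (8 * m) := by
        rw [show 8 * m = 3 * m + 5 * m by ring, pow_add, ← mul_assoc,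
          mul_assoc _ (2 ^ _), ← mul_pow, ENNReal.mul_inv_cancel two_ne_zero ENNReal.ofNat_ne_top,
          one_pow, mul_one]
    _ ≤ 3 ^ (5 * m) * 2⁻¹ ^ (8 * m) := by gcongr
    _ = (3 ^ 5 * 2⁻¹ ^ 8) ^ m := by rw [mul_pow, ← pow_mul, ← pow_mul]

theorem measure_denseAlong_eq_zero {a : ℕ → ℕ} (ha : Function.Injective a) (b : Bool) :
    μ (denseAlong a b) = 0 := by
  have hρ : (3 ^ 5 * 2⁻¹ ^ 8 : ℝ≥0∞) < 1 := by
    rw [← ENNReal.inv_pow, ← div_eq_mul_inv, ENNReal.div_lt_iff (by norm_num) (by norm_num)]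
    norm_num
  refine measure_setOfPred_frequently_eq_zero (ne_top_of_le_ne_top
    (tsum_geometric_lt_top.2 hρ).ne (ENNReal.tsum_le_tsum fun m => ?_))
  exact measure_setOf_three_le_count_le hμ ha b m

theorem exists_isGoodPair {T : Type} [Preorder T] (hK : ℵ₀ < nullCov μ)
    {N : T → Set (ℕ → Bool)} (hN : ∀ t, μ (N t) = 0) {t : T} (ht : #(Iio t) < nullCov μ)
    {f : Iio t → Set ℕ × Set ℕ} (hf : ∀ s, (f s).1.Infinite ∧ (f s).2.Infinite) :
    ∃ x y, x.Infinite ∧ y.Infinite ∧ IsGoodPair N t f x y := by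
  have hnull {z : Set ℕ} (hz : z.Infinite) : μ (denseAlong (Nat.nth (· ∈ z)) true) = 0 :=
    measure_denseAlong_eq_zero hμ (Nat.nth_injective hz) true
  have hid (b : Bool) : μ (denseAlong id b) = 0 :=
    measure_denseAlong_eq_zero hμ Function.injective_id b
  obtain ⟨p, hpE, hpN⟩ := exists_notMem_forall_notMem_of_mk_lt_nullCov hK ht
    (g := fun s : Iio t => N s ∪ denseAlong (Nat.nth (· ∈ (f s).2)) true)
    (fun s => measure_union_null (hN s) (hnull (hf s).2))
    (measure_union_null (hid true) (hid false))
  obtain ⟨x, rfl⟩ : ∃ x, chi x = p := ⟨_, chi_setOf_eq_true p⟩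
  simp only [mem_union, not_or] at hpE hpN
  have hx : x.Infinite := infinite_of_chi_notMem_denseAlong_id_false hpE.2
  obtain ⟨q, hqE, hqN⟩ := exists_notMem_forall_notMem_of_mk_lt_nullCov hK ht
    (g := fun s : Iio t => N s ∪ denseAlong (Nat.nth (· ∈ (f s).1)) true)
    (fun s => measure_union_null (hN s) (hnull (hf s).1))
    (measure_union_null (measure_union_null (hid true) (hid false)) (hnull hx))
  obtain ⟨y, rfl⟩ : ∃ y, chi y = q := ⟨_, chi_setOf_eq_true q⟩
  simp only [mem_union, not_or] at hqE hqN
  exact ⟨x, y, hx, infinite_of_chi_notMem_denseAlong_id_false hqE.1.2,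
    ⟨hpE.1, hqE.1.1, hqE.2, fun s => (hpN s).1, fun s => (hqN s).1,
      fun s => (hpN s).2, fun s => (hqN s).2⟩⟩

end CylinderMeasure

/-- Assuming cov(L) = cof(L) for the null ideal `L` of the uniform product measure `μ`
on `2^ω`, there are downward-closed `X, Y ⊆ [ω]^ω` of positive outer measure with
`X ∩ Y` of measure zero. -/
theorem stmt16 (μ : Measure (ℕ → Bool))
    (hμ : ∀ (s : Finset ℕ) (f : ℕ → Bool),
      μ {y : ℕ → Bool | ∀ n ∈ s, y n = f n} = (1 / 2) ^ s.card)
    (hcovcof :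
      sInf {c : Cardinal | ∃ S : Set (Set (ℕ → Bool)), (∀ A ∈ S, μ A = 0) ∧ #S = c ∧
          ⋃₀ S = Set.univ} =
      sInf {c : Cardinal | ∃ C : Set (Set (ℕ → Bool)), (∀ A ∈ C, μ A = 0) ∧ #C = c ∧
          ∀ A : Set (ℕ → Bool), μ A = 0 → ∃ B ∈ C, A ⊆ B}) :
    ∃ X Y : Set (Set ℕ), X ⊆ InfSets ∧ Y ⊆ InfSets ∧ DownClosed X ∧ DownClosed Y ∧
      μ (chi '' X) ≠ 0 ∧ μ (chi '' Y) ≠ 0 ∧ μ (chi '' (X ∩ Y)) = 0 := by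
  change nullCov μ = nullCof μ at hcovcof
  have hK : ℵ₀ < nullCov μ := aleph0_lt_nullCov
    (by simp [measure_univ_eq_one_of_cylinder hμ]) (measure_singleton_eq_zero_of_cylinder hμ)
  obtain ⟨N, hN, hNcofinal⟩ := exists_cofinal_family_indexed_by_nullCof (μ := μ)
  have : NoMaxOrder (nullCof μ).ord.ToType := Cardinal.noMaxOrder (hcovcof ▸ hK.le)
  obtain ⟨F, hF⟩ := WellFoundedLT.exists_forall_of_forall_exists
    (fun b : Set ℕ × Set ℕ => b.1.Infinite ∧ b.2.Infinite) (fun t f b => IsGoodPair N t f b.1 b.2)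
    fun t f hf => by
      obtain ⟨x, y, hx, hy, hxy⟩ :=
        exists_isGoodPair hμ hK hN (by rw [hcovcof]; simpa using mk_Iio_lt t) hf
      exact ⟨(x, y), ⟨hx, hy⟩, hxy⟩
  refine ⟨almostBelow fun t => (F t).1, almostBelow fun t => (F t).2,
    almostBelow_subset_infSets _, almostBelow_subset_infSets _,
    downClosed_almostBelow _, downClosed_almostBelow _, ?_, ?_, ?_⟩
  · exact measure_ne_zero_of_forall_gt_notMem hNcofinal
      (fun t => mem_image_of_mem chi (self_mem_almostBelow (hF t).1.1))
      fun s t hst => (hF t).2.fst_notMem ⟨s, hst⟩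
  · exact measure_ne_zero_of_forall_gt_notMem hNcofinal
      (fun t => mem_image_of_mem chi (self_mem_almostBelow (hF t).1.2))
      fun s t hst => (hF t).2.snd_notMem ⟨s, hst⟩
  · exact measure_mono_null (chi_image_almostBelow_inter_subset
      (fun t => (hF t).2.fst_sparse) (fun t => (hF t).2.snd_sparse)
      (fun t => (hF t).2.snd_sparse_along_fst) (fun s t hst => (hF t).2.snd_sparse_along ⟨s, hst⟩)
      (fun s t hst => (hF t).2.fst_sparse_along ⟨s, hst⟩))
      (measure_denseAlong_eq_zero hμ Function.injective_id false)
end
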